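/- Let x be an infinite sequence over a finite alphabet Σ with appearance bound A, and let n ≥ 1. Then the prefix w = x[1,n] of x of length n has a word attractor P with |P| ≤ |Σ| + 2·A·(⌊log₂ n⌋ + 1). -/
import Mathlib


open List

variable {α : Type*}

/-- `(i, j)` is an occurrence of `u` in `w`: `1 ≤ i ≤ j ≤ |w|` and `u = w[i,j]`. -/
def Occ (w u : List α) (i j : ℕ) : Prop :=
  1 ≤ i ∧ i ≤ j ∧ j ≤ w.length ∧ u = (w.drop (i - 1)).take (j - i + 1)

/-- `u` is a factor of `w`: it has an occurrence in `w`. -/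
def IsFactor (w u : List α) : Prop := ∃ i j, Occ w u i j

/-- `EP w u` is the set of ending positions of occurrences of `u` in `w`. -/
def EP (w u : List α) : Set ℕ := { j | ∃ i, Occ w u i j }

/-- `u` covers `P`: some occurrence `(i, j)` of `u` in `w` contains a position of `P`. -/
def Covers (w : List α) (P : Set ℕ) (u : List α) : Prop :=
  ∃ i j, Occ w u i j ∧ ∃ t ∈ P, i ≤ t ∧ t ≤ j

/-- `P` is a word attractor of `w`: every nonempty factor of `w` covers `P`. -/
def IsAttractor (w : List α) (P : Set ℕ) : Prop :=
  ∀ u : List α, u ≠ [] → IsFactor w u → Covers w P u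

/-- The prefix `x[1,n]` of the infinite sequence `x = x₁x₂⋯`. -/
def pref (x : ℕ → α) (n : ℕ) : List α := (List.range n).map fun k => x (k + 1)

/-- `u` is a factor of the infinite sequence `x`. -/
def IsFactorInf (x : ℕ → α) (u : List α) : Prop := ∃ N, IsFactor (pref x N) u

/-- `x` has appearance bound `A`: for every `m ≥ 1`, every factor of `x` of length `m`
occurs as a factor of the prefix `x[1, A·m]`. -/
def HasAppearanceBound (x : ℕ → α) (A : ℕ) : Prop :=
  ∀ m : ℕ, 1 ≤ m → ∀ u : List α, u.length = m → IsFactorInf x u →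
    IsFactor (pref x (A * m)) u

lemma pref_length (x : ℕ → α) (n : ℕ) : (pref x n).length = n := by simp [pref]

lemma occ_length {w u : List α} {i j : ℕ} (h : Occ w u i j) : u.length = j - i + 1 := by
  obtain ⟨h1, h2, h3, h4⟩ := h
  rw [h4, List.length_take, List.length_drop]
  omega

lemma pref_take (x : ℕ → α) {N n : ℕ} (h : N ≤ n) : (pref x n).take N = pref x N := by
  rw [pref, pref, ← List.map_take, List.take_range, Nat.min_eq_left h]

lemma occ_mono {x : ℕ → α} {N n i j : ℕ} {u : List α} (h : N ≤ n)
    (ho : Occ (pref x N) u i j) : Occ (pref x n) u i j := by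
  obtain ⟨h1, h2, h3, h4⟩ := ho
  rw [pref_length] at h3
  refine ⟨h1, h2, by rw [pref_length]; omega, ?_⟩
  rw [h4, ← pref_take x h, List.drop_take, List.take_take]
  congr 1
  omega

lemma pref_single {x : ℕ → α} {n p : ℕ} (h1 : 1 ≤ p) (h2 : p ≤ n) :
    ((pref x n).drop (p - 1)).take 1 = [x p] := by
  have hp : p - 1 + 1 = p := by omega
  rw [List.take_one, List.head?_drop]
  have : (pref x n)[p-1]? = some (x ((p-1)+1)) := by
    simp [pref]
    exact ⟨p - 1, List.getElem?_range (by omega), rfl⟩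
  rw [this, hp]
  rfl

lemma card_multiples (d L B : ℕ) (hd : 0 < d) (hL : L ≤ B * d) :
    ((Finset.Icc 1 L).filter (fun t => d ∣ t)).card ≤ B := by
  have hsub : (Finset.Icc 1 L).filter (fun t => d ∣ t) ⊆
      (Finset.Icc 1 B).image (· * d) := by
    intro t ht
    simp only [Finset.mem_filter, Finset.mem_Icc] at ht
    obtain ⟨⟨ht1, ht2⟩, c, hc⟩ := ht
    have hc1 : 1 ≤ c := by
      rcases Nat.eq_zero_or_pos c with h | h
      · subst h; omega
      · exact h
    have hcB : c ≤ B := by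
      have : d * c ≤ d * B := by
        calc d * c = t := hc.symm
          _ ≤ B * d := le_trans ht2 hL
          _ = d * B := Nat.mul_comm _ _
      exact Nat.le_of_mul_le_mul_left this hd
    exact Finset.mem_image.2 ⟨c, Finset.mem_Icc.2 ⟨hc1, hcB⟩, by rw [hc, Nat.mul_comm]⟩
  calc ((Finset.Icc 1 L).filter (fun t => d ∣ t)).card
      ≤ ((Finset.Icc 1 B).image (· * d)).card := Finset.card_le_card hsub
    _ ≤ (Finset.Icc 1 B).card := Finset.card_image_le
    _ = B := by simp

/-- For an infinite sequence `x` over a finite alphabet with appearance bound `A`, and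
`n ≥ 1`: the prefix `x[1,n]` has a word attractor of size at most
`|Σ| + 2·A·(⌊log₂ n⌋ + 1)`. -/
theorem stmt11 {α : Type*} [Fintype α] (x : ℕ → α) (A : ℕ) (hA : 1 ≤ A)
    (happ : HasAppearanceBound x A) (n : ℕ) (hn : 1 ≤ n) :
    ∃ P : Finset ℕ, ↑P ⊆ Set.Icc 1 n ∧ IsAttractor (pref x n) ↑P ∧
      P.card ≤ Fintype.card α + 2 * A * (Nat.log 2 n + 1) := by
  classical
  set K := Nat.log 2 n + 1 with hK
  -- positions of first occurrences of letters
  set Pa : Finset ℕ := Finset.univ.image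
    (fun a : α => if h : ∃ q, (1 ≤ q ∧ q ≤ n) ∧ x q = a then Nat.find h else 1) with hPa
  -- level sets
  set Pk : ℕ → Finset ℕ := fun k =>
    (Finset.Icc 1 (min n (A * 2 ^ k))).filter (fun t => 2 ^ (k - 1) ∣ t) with hPk
  set P : Finset ℕ := Pa ∪ (Finset.Icc 1 K).biUnion Pk with hP
  have hPaIcc : Pa ⊆ Finset.Icc 1 n := by
    intro t ht
    obtain ⟨a, -, rfl⟩ := Finset.mem_image.1 ht
    split_ifs with h
    · obtain ⟨⟨h1, h2⟩, -⟩ := Nat.find_spec h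
      exact Finset.mem_Icc.2 ⟨h1, h2⟩
    · exact Finset.mem_Icc.2 ⟨le_refl 1, hn⟩
  have hPkIcc : ∀ k, Pk k ⊆ Finset.Icc 1 n := by
    intro k t ht
    simp only [hPk, Finset.mem_filter, Finset.mem_Icc] at ht
    exact Finset.mem_Icc.2 ⟨ht.1.1, le_trans ht.1.2 (min_le_left _ _)⟩
  have hPIcc : P ⊆ Finset.Icc 1 n := by
    intro t ht
    rcases Finset.mem_union.1 ht with h | h
    · exact hPaIcc h
    · obtain ⟨k, _, hk⟩ := Finset.mem_biUnion.1 h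
      exact hPkIcc k hk
  refine ⟨P, ?_, ?_, ?_⟩
  · intro t ht
    have := hPIcc ht
    simpa [Set.mem_Icc] using Finset.mem_Icc.1 this
  · -- attractor
    intro u hne ⟨i, j, hi1, hij, hjn, hu⟩
    rw [pref_length] at hjn
    have hmocc : u.length = j - i + 1 := occ_length ⟨hi1, hij, by rw [pref_length]; omega, hu⟩
    set m := u.length with hm
    have hm1 : 1 ≤ m := by
      cases u with
      | nil => exact absurd rfl hne
      | cons a l => simp [hm]
    by_cases hm2 : m = 1
    · -- single letter
      have hji : j = i := by omega
      have hux : u = [x i] := by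
        rw [hu, hji]
        have : i - i + 1 = 1 := by omega
        rw [this]
        exact pref_single hi1 (by omega)
      have hex : ∃ q, (1 ≤ q ∧ q ≤ n) ∧ x q = x i := ⟨i, ⟨hi1, by omega⟩, rfl⟩
      set q := Nat.find hex with hq
      obtain ⟨⟨hq1, hq2⟩, hqx⟩ := Nat.find_spec hex
      have hqPa : q ∈ Pa := by
        rw [hPa]
        exact Finset.mem_image.2 ⟨x i, Finset.mem_univ _, by rw [dif_pos hex]⟩
      refine ⟨q, q, ⟨hq1, le_refl q, by rw [pref_length]; exact hq2, ?_⟩,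
        q, ?_, le_refl q, le_refl q⟩
      · have : q - q + 1 = 1 := by omega
        rw [this, pref_single hq1 hq2, hux, hqx]
      · exact Finset.mem_coe.2 (Finset.mem_union_left _ hqPa)
    · -- m ≥ 2
      have hm2' : 2 ≤ m := by omega
      set k := Nat.log 2 (m - 1) + 1 with hkdef
      set d := 2 ^ (k - 1) with hd
      have hd' : d = 2 ^ Nat.log 2 (m - 1) := by simp [hd, hkdef]
      have hdm : d ≤ m - 1 := by
        rw [hd']; exact Nat.pow_log_le_self 2 (by omega)
      have hm2k : m ≤ 2 ^ k := by
        have := Nat.lt_pow_succ_log_self (by norm_num : 1 < 2) (m - 1)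
        simp only [hkdef]
        omega
      have hdpos : 0 < d := by positivity
      have hkK : k ≤ K := by
        have : Nat.log 2 (m - 1) ≤ Nat.log 2 n := Nat.log_mono_right (by omega)
        omega
      have hmn : m ≤ n := by omega
      -- occurrence within [1, min n (A * 2^k)]
      have hoccex : ∃ i' j', Occ (pref x n) u i' j' ∧ j' ≤ min n (A * 2 ^ k) := by
        by_cases hAm : A * m ≤ n
        · obtain ⟨i', j', ho⟩ := happ m hm1 u rfl ⟨n, i, j, hi1, hij, by rw [pref_length]; omega, hu⟩
          have hj' : j' ≤ A * m := by
            have := ho.2.2.1; rwa [pref_length] at this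
          refine ⟨i', j', occ_mono hAm ho, ?_⟩
          have : A * m ≤ A * 2 ^ k := Nat.mul_le_mul_left A hm2k
          omega
        · refine ⟨i, j, ⟨hi1, hij, by rw [pref_length]; omega, hu⟩, ?_⟩
          have : A * m ≤ A * 2 ^ k := Nat.mul_le_mul_left A hm2k
          omega
      obtain ⟨i', j', ho', hj'L⟩ := hoccex
      obtain ⟨hi'1, hi'j', hj'n, hu'⟩ := ho'
      rw [pref_length] at hj'n
      have hlen' : u.length = j' - i' + 1 :=
        occ_length ⟨hi'1, hi'j', by rw [pref_length]; omega, hu'⟩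
      have hij'd : i' + d ≤ j' := by omega
      -- smallest multiple of d that is ≥ i'
      set t := ((i' + d - 1) / d) * d with ht
      have htle : t ≤ i' + d - 1 := Nat.div_mul_le_self _ _
      have hmod : (i' + d - 1) / d * d + (i' + d - 1) % d = i' + d - 1 :=
        Nat.div_add_mod' _ _
      have hmodlt : (i' + d - 1) % d < d := Nat.mod_lt _ hdpos
      have hit : i' ≤ t := by omega
      have htj : t ≤ j' := by omega
      have htPk : t ∈ Pk k := by
        simp only [hPk, Finset.mem_filter, Finset.mem_Icc]
        exact ⟨⟨by omega, by omega⟩, dvd_mul_left _ _⟩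
      refine ⟨i', j', ⟨hi'1, hi'j', by rw [pref_length]; omega, hu'⟩, t, ?_, hit, htj⟩
      refine Finset.mem_coe.2 (Finset.mem_union_right _ ?_)
      exact Finset.mem_biUnion.2 ⟨k, Finset.mem_Icc.2 ⟨by omega, hkK⟩, htPk⟩
  · -- cardinality bound
    have h1 : Pa.card ≤ Fintype.card α := by
      rw [hPa]
      calc (Finset.univ.image _).card ≤ (Finset.univ : Finset α).card := Finset.card_image_le
        _ = Fintype.card α := Finset.card_univ
    have h2 : ∀ k ∈ Finset.Icc 1 K, (Pk k).card ≤ 2 * A := by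
      intro k hk
      rw [Finset.mem_Icc] at hk
      apply card_multiples _ _ _ (by positivity)
      have : 2 ^ k = 2 * 2 ^ (k - 1) := by
        rw [← pow_succ']
        congr 1
        omega
      calc min n (A * 2 ^ k) ≤ A * 2 ^ k := min_le_right _ _
        _ = 2 * A * 2 ^ (k - 1) := by rw [this]; ring
    calc P.card ≤ Pa.card + ((Finset.Icc 1 K).biUnion Pk).card := Finset.card_union_le _ _
      _ ≤ Pa.card + ∑ k ∈ Finset.Icc 1 K, (Pk k).card :=
          Nat.add_le_add_left Finset.card_biUnion_le _
      _ ≤ Fintype.card α + K * (2 * A) := by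
          have := Finset.sum_le_card_nsmul (Finset.Icc 1 K) (fun k => (Pk k).card) (2 * A) h2
          simp only [smul_eq_mul, Nat.card_Icc, Nat.add_sub_cancel] at this
          omega
      _ = Fintype.card α + 2 * A * (Nat.log 2 n + 1) := by rw [hK]; ring
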